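/- The Gaussian densities Θ = e^ν satisfy the strict ordering Θ(dP₃) < Θ(dP₂) < Θ(dP₁), given the values Θ(dP₃) = 3/e², Θ(dP₂) = e^{ν(α₂)} with ν(α) the closed-form entropy at the root α₂ ∈ (-0.44, -0.43) of the soliton condition, and Θ(dP₁) = 3.826/e²; concretely, prove 3/e² < e^{ν(α)} < 3.826/e² for all α ∈ [-0.44, -0.43]. -/
import Mathlib


/-- The closed-form Perelman entropy of the dP₂ soliton as a function of α. -/
noncomputable def nuEnt (α : ℝ) : ℝ :=
  α * (1 + 2 * Real.exp α - 3 * Real.exp (3 * α)) /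
      (1 - α - 2 * Real.exp α + Real.exp (3 * α)) +
    Real.log ((1 - α - 2 * Real.exp α + Real.exp (3 * α)) / α ^ 2)

lemma exp_lb5 {x : ℝ} (hx : 0 ≤ x) :
    1 + x + x^2/2 + x^3/6 + x^4/24 + x^5/120 ≤ Real.exp x := by
  have h := Real.sum_le_exp_of_nonneg hx 6
  simp [Finset.sum_range_succ, Nat.factorial] at h
  nlinarith [h]

lemma exp_ub5 {x : ℝ} (h0 : 0 ≤ x) (h1 : x ≤ 1) :
    Real.exp x ≤ 1 + x + x^2/2 + x^3/6 + x^4/24 + x^5/120 + x^6*7/4320 := by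
  have h := Real.exp_bound' h0 h1 (n := 6) (by norm_num)
  simp [Finset.sum_range_succ, Nat.factorial] at h
  nlinarith [h]

lemma exp_lb3 {x : ℝ} (hx : 0 ≤ x) :
    1 + x + x^2/2 + x^3/6 ≤ Real.exp x := by
  have h := Real.sum_le_exp_of_nonneg hx 4
  simp [Finset.sum_range_succ, Nat.factorial] at h
  nlinarith [h]

lemma exp_ub4 {x : ℝ} (h0 : 0 ≤ x) (h1 : x ≤ 1) :
    Real.exp x ≤ 1 + x + x^2/2 + x^3/6 + x^4*5/96 := by
  have h := Real.exp_bound' h0 h1 (n := 4) (by norm_num)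
  simp [Finset.sum_range_succ, Nat.factorial] at h
  nlinarith [h]

lemma exp_neg_bounds (q l u : ℝ) (hq : 0 ≤ q) (hq1 : q ≤ 1)
    (hl : l * (1 + q + q^2/2 + q^3/6 + q^4/24 + q^5/120 + q^6*7/4320) ≤ 1)
    (hu : 1 ≤ u * (1 + q + q^2/2 + q^3/6 + q^4/24 + q^5/120)) (hl0 : 0 < l) :
    l ≤ Real.exp (-q) ∧ Real.exp (-q) ≤ u := by
  have h1 := exp_lb5 hq
  have h2 := exp_ub5 hq hq1
  have hpos : 0 < Real.exp q := Real.exp_pos q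
  have hne : Real.exp (-q) = 1 / Real.exp q := by rw [Real.exp_neg, one_div]
  rw [hne]
  constructor
  · rw [le_div_iff₀ hpos]; nlinarith
  · rw [div_le_iff₀ hpos]
    have hS : (1:ℝ) ≤ 1 + q + q^2/2 + q^3/6 + q^4/24 + q^5/120 := by
      nlinarith [pow_nonneg hq 2, pow_nonneg hq 3, pow_nonneg hq 4, pow_nonneg hq 5]
    have hu0 : (0:ℝ) ≤ u := by nlinarith [hu, hS]
    nlinarith [mul_le_mul_of_nonneg_left h1 hu0]

lemma e44 : (0.644035:ℝ) ≤ Real.exp (-0.44) ∧ Real.exp (-0.44) ≤ 0.644041 :=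
  exp_neg_bounds 0.44 0.644035 0.644041 (by norm_num) (by norm_num)
    (by norm_num) (by norm_num) (by norm_num)

lemma e435 : (0.647264:ℝ) ≤ Real.exp (-0.435) ∧ Real.exp (-0.435) ≤ 0.647269 :=
  exp_neg_bounds 0.435 0.647264 0.647269 (by norm_num) (by norm_num)
    (by norm_num) (by norm_num) (by norm_num)

lemma e43 : (0.650508:ℝ) ≤ Real.exp (-0.43) ∧ Real.exp (-0.43) ≤ 0.650514 :=
  exp_neg_bounds 0.43 0.650508 0.650514 (by norm_num) (by norm_num)
    (by norm_num) (by norm_num) (by norm_num)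

set_option maxHeartbeats 800000 in
lemma nuEnt_case (α alo ahi el eu dlo dhi slo shi : ℝ)
    (h1 : alo ≤ α) (h2 : α ≤ ahi) (hahi : ahi < 0)
    (hel : el ≤ Real.exp α) (heu : Real.exp α ≤ eu) (hel0 : 0 < el)
    (hdlo0 : 0 < dlo)
    (hD1 : dlo ≤ 1 - ahi - 2*eu + el^3)
    (hD2 : 1 - alo - 2*el + eu^3 ≤ dhi)
    (hN0 : 0 < 1 + 2*el - 3*eu^3)
    (hslo : slo < 0) (hshi : shi < 0)
    (hs1 : slo * dlo ≤ alo * (1 + 2*eu - 3*el^3))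
    (hs2 : ahi * (1 + 2*el - 3*eu^3) ≤ shi * dhi)
    (hc0 : 0 ≤ slo + 2) (hc1 : shi + 2 ≤ 1)
    (hfin1 : 3*alo^2 < (1+(slo+2)+(slo+2)^2/2+(slo+2)^3/6) * dlo)
    (hfin2 : (1+(shi+2)+(shi+2)^2/2+(shi+2)^3/6+(shi+2)^4*5/96) * dhi < 3.826*ahi^2) :
    3 / Real.exp 1 ^ 2 < Real.exp (nuEnt α) ∧
      Real.exp (nuEnt α) < 3.826 / Real.exp 1 ^ 2 := by
  have hα0 : α < 0 := lt_of_le_of_lt h2 hahi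
  have hα2 : (0:ℝ) < α^2 :=
    lt_of_le_of_ne (sq_nonneg α) (Ne.symm (pow_ne_zero 2 (ne_of_lt hα0)))
  have h3α : Real.exp (3*α) = Real.exp α ^ 3 := by
    rw [show (3:ℝ)*α = α+α+α by ring, Real.exp_add, Real.exp_add]; ring
  have hnu : nuEnt α =
      α * (1 + 2*Real.exp α - 3*Real.exp α ^ 3) / (1 - α - 2*Real.exp α + Real.exp α ^ 3)
        + Real.log ((1 - α - 2*Real.exp α + Real.exp α ^ 3) / α^2) := by
    rw [nuEnt, h3α]
  set E := Real.exp α with hEdef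
  have hE0 : 0 < E := Real.exp_pos α
  set N := 1 + 2*E - 3*E^3 with hNdef
  set D := 1 - α - 2*E + E^3 with hDdef
  have hcl : el^3 ≤ E^3 := pow_le_pow_left₀ hel0.le hel 3
  have hcu : E^3 ≤ eu^3 := pow_le_pow_left₀ hE0.le heu 3
  have hDlo : dlo ≤ D := by rw [hDdef]; linarith
  have hDhi : D ≤ dhi := by rw [hDdef]; linarith
  have hDpos : 0 < D := lt_of_lt_of_le hdlo0 hDlo
  have hNlo : 1 + 2*el - 3*eu^3 ≤ N := by rw [hNdef]; linarith
  have hNhi : N ≤ 1 + 2*eu - 3*el^3 := by rw [hNdef]; linarith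
  have hNpos : 0 < N := lt_of_lt_of_le hN0 hNlo
  have halo : alo < 0 := lt_of_le_of_lt (h1.trans h2) hahi
  have hsl : slo * D ≤ α * N := by
    have t1 : slo * D ≤ slo * dlo := mul_le_mul_of_nonpos_left hDlo hslo.le
    have t2 : alo * (1 + 2*eu - 3*el^3) ≤ alo * N := mul_le_mul_of_nonpos_left hNhi halo.le
    have t3 : alo * N ≤ α * N := mul_le_mul_of_nonneg_right h1 hNpos.le
    linarith
  have hsh : α * N ≤ shi * D := by
    have t1 : α * N ≤ ahi * N := mul_le_mul_of_nonneg_right h2 hNpos.le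
    have t2 : ahi * N ≤ ahi * (1 + 2*el - 3*eu^3) := mul_le_mul_of_nonpos_left hNlo hahi.le
    have t3 : shi * dhi ≤ shi * D := mul_le_mul_of_nonpos_left hDhi hshi.le
    linarith
  have hs_lo : slo ≤ α * N / D := (le_div_iff₀ hDpos).mpr hsl
  have hs_hi : α * N / D ≤ shi := (div_le_iff₀ hDpos).mpr hsh
  have hexpNu : Real.exp (nuEnt α) = Real.exp (α * N / D) * (D / α^2) := by
    rw [hnu, Real.exp_add, Real.exp_log (div_pos hDpos hα2)]
  have e2 : Real.exp 1 ^ 2 = Real.exp 2 := by rw [sq, ← Real.exp_add]; norm_num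
  have hcpos : (0:ℝ) ≤ α * N / D + 2 := by linarith
  constructor
  · -- lower bound
    have hElow : 1+(slo+2)+(slo+2)^2/2+(slo+2)^3/6 ≤ Real.exp (α * N / D + 2) :=
      le_trans (exp_lb3 hc0) (Real.exp_le_exp.mpr (by linarith))
    have hα2hi : α^2 ≤ alo^2 := by
      have h := pow_le_pow_left₀ (by linarith : (0:ℝ) ≤ -α) (by linarith : -α ≤ -alo) 2
      simpa [neg_pow] using h
    have hkey : 3*α^2 < Real.exp (α * N / D + 2) * D := by
      have hm := mul_le_mul hElow hDlo hdlo0.le (le_of_lt (Real.exp_pos _))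
      linarith [hm, hfin1, hα2hi]
    rw [hexpNu, div_lt_iff₀ (pow_pos (Real.exp_pos 1) 2), e2]
    have hre : Real.exp (α * N / D) * (D / α^2) * Real.exp 2
        = Real.exp (α * N / D) * Real.exp 2 * D / α^2 := by ring
    rw [hre, ← Real.exp_add, lt_div_iff₀ hα2]
    linarith
  · -- upper bound
    have hEhigh : Real.exp (α * N / D + 2)
        ≤ 1+(shi+2)+(shi+2)^2/2+(shi+2)^3/6+(shi+2)^4*5/96 :=
      le_trans (Real.exp_le_exp.mpr (by linarith)) (exp_ub4 (by linarith) hc1)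
    have hα2lo : ahi^2 ≤ α^2 := by
      have h := pow_le_pow_left₀ (by linarith : (0:ℝ) ≤ -ahi) (by linarith : -ahi ≤ -α) 2
      simpa [neg_pow] using h
    have hkey : Real.exp (α * N / D + 2) * D < 3.826*α^2 := by
      have hsh2 : (0:ℝ) ≤ shi + 2 := by linarith
      have hP0 : (0:ℝ) ≤ 1+(shi+2)+(shi+2)^2/2+(shi+2)^3/6+(shi+2)^4*5/96 := by
        linarith [pow_nonneg hsh2 2, pow_nonneg hsh2 3, pow_nonneg hsh2 4]
      have hm := mul_le_mul hEhigh hDhi hDpos.le hP0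
      linarith [hm, hfin2, hα2lo]
    rw [hexpNu, lt_div_iff₀ (pow_pos (Real.exp_pos 1) 2), e2]
    have hre : Real.exp (α * N / D) * (D / α^2) * Real.exp 2
        = Real.exp (α * N / D) * Real.exp 2 * D / α^2 := by ring
    rw [hre, ← Real.exp_add, div_lt_iff₀ hα2]
    linarith

/-- The Gaussian density of dP₂ lies strictly between those of dP₃ (`3/e²`) and
the Koiso soliton on dP₁ (`3.826/e²`). -/
theorem gaussian_density_ordering :
    ∀ α ∈ Set.Icc (-0.44 : ℝ) (-0.43),
      3 / Real.exp 1 ^ 2 < Real.exp (nuEnt α) ∧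
        Real.exp (nuEnt α) < 3.826 / Real.exp 1 ^ 2 := by
  intro α hα
  obtain ⟨h1, h2⟩ := hα
  rcases le_total α (-0.435) with hc | hc
  · exact nuEnt_case α (-0.44) (-0.435) 0.644035 0.647269 0.4075 0.4232 (-1.6125) (-1.515)
      h1 hc (by norm_num)
      (le_trans e44.1 (Real.exp_le_exp.mpr h1))
      (le_trans (Real.exp_le_exp.mpr hc) e435.2)
      (by norm_num) (by norm_num) (by norm_num) (by norm_num) (by norm_num)
      (by norm_num) (by norm_num) (by norm_num) (by norm_num) (by norm_num)
      (by norm_num) (by norm_num) (by norm_num)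
  · exact nuEnt_case α (-0.435) (-0.43) 0.647264 0.650514 0.4001 0.4158 (-1.618) (-1.518)
      hc h2 (by norm_num)
      (le_trans e435.1 (Real.exp_le_exp.mpr hc))
      (le_trans (Real.exp_le_exp.mpr h2) e43.2)
      (by norm_num) (by norm_num) (by norm_num) (by norm_num) (by norm_num)
      (by norm_num) (by norm_num) (by norm_num) (by norm_num) (by norm_num)
      (by norm_num) (by norm_num) (by norm_num)
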